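/- arXiv:1409.1396 — 2 statements merged into one kernel-verified Lean document; each statement's English description precedes it below -/
import Mathlib

section
/- For any positive integers k and n and any transcendental real number ζ, one has λ_{kn,1}(ζ) ≥ (λ_{n,1}(ζ) − k + 1)/k, with the convention that the right-hand side is ∞ when λ_{n,1}(ζ) = ∞. -/
open scoped ENNReal

/-- The system `|x| ≤ X`, `max_{1≤i≤k} |ζ_i·x − y_i| ≤ X^(−η)` has at least `j`
linearly independent integer solutions `(x, y_1, …, y_k) ∈ ℤ^(k+1)`.
Here the solution vector `v i : Fin (k+1) → ℤ` has `x = v i 0` and `y_m = v i m.succ`. -/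
def HasSolutions (k : ℕ) (ζ : Fin k → ℝ) (η X : ℝ) (j : ℕ) : Prop :=
  ∃ v : Fin j → (Fin (k + 1) → ℤ), LinearIndependent ℤ v ∧
    ∀ i : Fin j, |(v i 0 : ℝ)| ≤ X ∧
      ∀ m : Fin k, |ζ m * (v i 0 : ℝ) - (v i m.succ : ℝ)| ≤ X ^ (-η)

/-- `λ_{k,j}(ζ⃗)`: the supremum in `[0,∞]` of all `η ∈ ℝ` such that the system has at
least `j` linearly independent solutions for arbitrarily large real `X`. -/
noncomputable def lambdaVec (k j : ℕ) (ζ : Fin k → ℝ) : ℝ≥0∞ :=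
  sSup {e : ℝ≥0∞ | ∃ η : ℝ, e = ENNReal.ofReal η ∧
    ∀ X₀ : ℝ, ∃ X : ℝ, X₀ ≤ X ∧ HasSolutions k ζ η X j}

/-- `λ̂_{k,j}(ζ⃗)`: the supremum in `[0,∞]` of all `η ∈ ℝ` such that the system has at
least `j` linearly independent solutions for every sufficiently large real `X`. -/
noncomputable def lambdaHatVec (k j : ℕ) (ζ : Fin k → ℝ) : ℝ≥0∞ :=
  sSup {e : ℝ≥0∞ | ∃ η : ℝ, e = ENNReal.ofReal η ∧
    ∃ X₀ : ℝ, ∀ X : ℝ, X₀ ≤ X → HasSolutions k ζ η X j}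

/-- `λ_{k,j}(ζ) = λ_{k,j}(ζ, ζ², …, ζ^k)`. -/
noncomputable def lambdaPow (k j : ℕ) (ζ : ℝ) : ℝ≥0∞ :=
  lambdaVec k j fun i => ζ ^ ((i : ℕ) + 1)

/-- `λ̂_{k,j}(ζ) = λ̂_{k,j}(ζ, ζ², …, ζ^k)`. -/
noncomputable def lambdaHatPow (k j : ℕ) (ζ : ℝ) : ℝ≥0∞ :=
  lambdaHatVec k j fun i => ζ ^ ((i : ℕ) + 1)

/-!
If `x` and integers `y₁, …, yₙ` satisfy `|x| ≤ X` and `|x ζ^i - yᵢ| ≤ X^(-η)`, then, with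
`y₀ = x`, the products `y_{s₁} ⋯ y_{s_k}` over a splitting `s = s₁ + ⋯ + s_k` with `s_j ≤ n`
approximate `x^k ζ^s` for every `s ≤ kn` to within `≪ X^(k-1-η)`. Measured against the height
`X^k` of `x^k`, this is an approximation of exponent `(η - k + 1)/k` to `(ζ, …, ζ^{kn})`.
-/

open Finset Filter

theorem Nat.sum_range_min_tsub_mul {n s : ℕ} (k : ℕ) (hs : s ≤ k * n) :
    ∑ j ∈ range k, min n (s - j * n) = s := by
  induction k generalizing s with
  | zero => simp_all
  | succ k ih =>
    have hshift : ∀ j : ℕ, s - (j + 1) * n = s - n - j * n := fun j => by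
      rw [add_one_mul, add_comm, Nat.sub_sub]
    rw [sum_range_succ']
    simp_rw [hshift]
    rw [ih (by rw [add_one_mul] at hs; omega)]
    omega

theorem abs_prod_range_sub_prod_range_le {a b : ℕ → ℝ} {M ε : ℝ} (k : ℕ)
    (ha : ∀ j < k, |a j| ≤ M) (hb : ∀ j < k, |b j| ≤ M)
    (hab : ∀ j < k, |a j - b j| ≤ ε) :
    |∏ j ∈ range k, a j - ∏ j ∈ range k, b j| ≤ k * ε * M ^ (k - 1) := by
  induction k with
  | zero => simp
  | succ k ih =>
    have hprod_b : |∏ j ∈ range k, b j| ≤ M ^ k := by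
      rw [abs_prod]
      calc ∏ j ∈ range k, |b j| ≤ ∏ _j ∈ range k, M :=
            prod_le_prod (fun _ _ => abs_nonneg _) fun j hj => hb j (by simp at hj; omega)
        _ = M ^ k := by simp
    have hM : 0 ≤ M := (abs_nonneg _).trans (ha 0 k.succ_pos)
    have hε : 0 ≤ ε := (abs_nonneg _).trans (hab 0 k.succ_pos)
    have hih := ih (fun j hj => ha j (by omega)) (fun j hj => hb j (by omega))
      (fun j hj => hab j (by omega))
    rw [prod_range_succ, prod_range_succ]
    calc |(∏ j ∈ range k, a j) * a k - (∏ j ∈ range k, b j) * b k|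
        = |a k * (∏ j ∈ range k, a j - ∏ j ∈ range k, b j)
            + (a k - b k) * ∏ j ∈ range k, b j| := by ring_nf
      _ ≤ M * (k * ε * M ^ (k - 1)) + ε * M ^ k := by
        grw [abs_add_le, abs_mul, abs_mul, ha k k.lt_succ_self, hab k k.lt_succ_self, hprod_b, hih]
      _ = (k + 1 : ℕ) * ε * M ^ (k + 1 - 1) := by
        obtain _ | k := k
        · simp
        · simp only [Nat.add_sub_cancel]
          push_cast
          ring

section PowVec

variable {n k : ℕ}

/-- The indices `min n (s - j n)`, `j < k`, are at most `n` and sum to `s ≤ kn`; so if `v`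
approximates `x (1, ζ, …, ζ^n)`, then `powVec n k v` approximates `x^k (1, ζ, …, ζ^{kn})`. -/
def powVec (n k : ℕ) (v : Fin (n + 1) → ℤ) : Fin (k * n + 1) → ℤ := fun s =>
  ∏ j ∈ range k, v ⟨min n (s - j * n), Nat.lt_succ_of_le (min_le_left _ _)⟩

@[simp]
theorem powVec_zero (v : Fin (n + 1) → ℤ) : powVec n k v 0 = v 0 ^ k := by
  simp [powVec]

theorem abs_pow_mul_sub_powVec_le {ζ ε M : ℝ} {v : Fin (n + 1) → ℤ}
    (happrox : ∀ i : Fin (n + 1), |ζ ^ (i : ℕ) * v 0 - v i| ≤ ε)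
    (hζM : ∀ i : Fin (n + 1), |ζ ^ (i : ℕ) * v 0| ≤ M) (hvM : ∀ i, |(v i : ℝ)| ≤ M)
    (s : Fin (k * n + 1)) :
    |ζ ^ (s : ℕ) * (v 0 : ℝ) ^ k - powVec n k v s| ≤ k * ε * M ^ (k - 1) := by
  have hsplit : ζ ^ (s : ℕ) * (v 0 : ℝ) ^ k =
      ∏ j ∈ range k, ζ ^ min n (s - j * n) * (v 0 : ℝ) := by
    rw [prod_mul_distrib, prod_pow_eq_pow_sum, Nat.sum_range_min_tsub_mul k (Nat.le_of_lt_succ s.2),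
      prod_const, card_range]
  have hle : ∀ j, min n (s - j * n) < n + 1 := fun _ => Nat.lt_succ_of_le (min_le_left _ _)
  rw [hsplit, powVec, Int.cast_prod]
  exact abs_prod_range_sub_prod_range_le k (fun j _ => hζM ⟨_, hle j⟩) (fun _ _ => hvM _)
    (fun j _ => happrox ⟨_, hle j⟩)

end PowVec

theorem abs_pow_mul_le_of_le {ζ x X : ℝ} {i n : ℕ} (hx : |x| ≤ X) (hi : i ≤ n) :
    |ζ ^ i * x| ≤ (|ζ| + 1) ^ n * X := by
  rw [abs_mul, abs_pow]
  have hζ : 1 ≤ |ζ| + 1 := le_add_of_nonneg_left (abs_nonneg ζ)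
  gcongr
  calc |ζ| ^ i ≤ (|ζ| + 1) ^ i := by gcongr; linarith
    _ ≤ (|ζ| + 1) ^ n := pow_le_pow_right₀ hζ hi

theorem hasSolutions_one_iff {k : ℕ} {ζ : Fin k → ℝ} {η X : ℝ} :
    HasSolutions k ζ η X 1 ↔ ∃ v : Fin (k + 1) → ℤ, v ≠ 0 ∧ |(v 0 : ℝ)| ≤ X ∧
      ∀ m, |ζ m * v 0 - v m.succ| ≤ X ^ (-η) := by
  constructor
  · rintro ⟨v, hli, h⟩
    exact ⟨v 0, linearIndependent_unique_iff.1 hli, h 0⟩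
  · rintro ⟨v, hv, h⟩
    exact ⟨fun _ => v, linearIndependent_unique_iff.2 hv, fun _ => h⟩

theorem head_ne_zero_of_abs_sub_lt_one {k : ℕ} {ζ : Fin k → ℝ} {v : Fin (k + 1) → ℤ}
    (hv : v ≠ 0) (h : ∀ m, |ζ m * v 0 - v m.succ| < 1) : v 0 ≠ 0 := by
  intro h0
  refine hv (funext fun i => Fin.cases h0 (fun m => ?_) i)
  have hm := h m
  rw [h0, Int.cast_zero, mul_zero, zero_sub, abs_neg] at hm
  exact Int.abs_lt_one_iff.1 (by exact_mod_cast hm)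

theorem HasSolutions.pow {k n : ℕ} {ζ η η' X : ℝ} (hX : 1 ≤ X) (hη : X ^ (-η) < 1)
    (hbound : k * X ^ (-η) * (((|ζ| + 1) ^ n + 1) * X) ^ (k - 1) ≤ (X ^ k) ^ (-η'))
    (h : HasSolutions n (fun i => ζ ^ ((i : ℕ) + 1)) η X 1) :
    HasSolutions (k * n) (fun i => ζ ^ ((i : ℕ) + 1)) η' (X ^ k) 1 := by
  rw [hasSolutions_one_iff] at h ⊢
  obtain ⟨v, hv, hx, happrox⟩ := h
  have hx0 : v 0 ≠ 0 := head_ne_zero_of_abs_sub_lt_one hv fun m => (happrox m).trans_lt hη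
  have happrox' : ∀ i : Fin (n + 1), |ζ ^ (i : ℕ) * v 0 - v i| ≤ X ^ (-η) := by
    refine Fin.forall_fin_succ.2 ⟨?_, fun m => ?_⟩
    · simpa using Real.rpow_nonneg (zero_le_one.trans hX) _
    · simpa using happrox m
  have hζM : ∀ i : Fin (n + 1), |ζ ^ (i : ℕ) * v 0| ≤ ((|ζ| + 1) ^ n + 1) * X := fun i =>
    (abs_pow_mul_le_of_le hx (Nat.le_of_lt_succ i.2)).trans (by linarith)
  have hvM : ∀ i : Fin (n + 1), |(v i : ℝ)| ≤ ((|ζ| + 1) ^ n + 1) * X := fun i => by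
    have hζi := abs_pow_mul_le_of_le (ζ := ζ) hx (Nat.le_of_lt_succ i.2)
    have htri := abs_sub_abs_le_abs_sub (v i : ℝ) (ζ ^ (i : ℕ) * v 0)
    rw [abs_sub_comm] at htri
    linarith [happrox' i]
  refine ⟨powVec n k v, fun h0 => pow_ne_zero k hx0 (by simpa using congrFun h0 0), ?_,
    fun m => ?_⟩
  · simpa using pow_le_pow_left₀ (abs_nonneg _) hx k
  · have hm := abs_pow_mul_sub_powVec_le happrox' hζM hvM m.succ
    simp only [Fin.val_succ, powVec_zero, Int.cast_pow] at hm ⊢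
    exact hm.trans hbound

theorem eventually_mul_rpow_mul_pow_le {k : ℕ} {K η η' : ℝ} (hk : 0 < k)
    (hη : k * η' + (k - 1) < η) :
    ∀ᶠ X in atTop, K * X ^ (-η) * X ^ (k - 1) ≤ (X ^ k) ^ (-η') := by
  set δ := η - (k - 1) - k * η' with hδ
  filter_upwards [eventually_gt_atTop 0,
    (tendsto_rpow_atTop (by linarith : 0 < δ)).eventually_ge_atTop K] with X hX hK
  have hpow : X ^ (k - 1) = X ^ ((k : ℝ) - 1) := by
    rw [← Real.rpow_natCast, Nat.cast_pred hk]
  calc K * X ^ (-η) * X ^ (k - 1) ≤ X ^ δ * X ^ (-η) * X ^ ((k : ℝ) - 1) := by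
        rw [hpow]; gcongr
    _ = (X ^ k) ^ (-η') := by
        rw [← Real.rpow_natCast_mul hX.le, ← Real.rpow_add hX, ← Real.rpow_add hX, hδ]
        ring_nf

theorem frequently_hasSolutions_mul {k n : ℕ} {ζ η η' : ℝ} (hk : 0 < k) (hη' : 0 ≤ η')
    (hη : k * η' + (k - 1) < η)
    (h : ∃ᶠ X in atTop, HasSolutions n (fun i => ζ ^ ((i : ℕ) + 1)) η X 1) :
    ∃ᶠ Y in atTop, HasSolutions (k * n) (fun i => ζ ^ ((i : ℕ) + 1)) η' Y 1 := by
  have hη0 : 0 < η := by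
    have : (1 : ℝ) ≤ k := by exact_mod_cast hk
    nlinarith
  refine (tendsto_pow_atTop hk.ne').frequently ?_
  have hbound := eventually_mul_rpow_mul_pow_le (K := k * ((|ζ| + 1) ^ n + 1) ^ (k - 1)) hk hη
  refine (h.and_eventually ((eventually_gt_atTop 1).and hbound)).mono ?_
  rintro X ⟨hsol, hX, hXbound⟩
  refine hsol.pow hX.le (Real.rpow_lt_one_of_one_lt_of_neg hX (neg_neg_of_pos hη0)) ?_
  rw [mul_pow]
  linarith

theorem ofReal_le_lambdaVec {k j : ℕ} {ζ : Fin k → ℝ} {η : ℝ}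
    (h : ∃ᶠ X in atTop, HasSolutions k ζ η X j) : ENNReal.ofReal η ≤ lambdaVec k j ζ :=
  le_sSup ⟨η, rfl, frequently_atTop.1 h⟩

theorem ofReal_le_lambdaPow_mul {k n : ℕ} {ζ η : ℝ} (hk : 0 < k)
    (h : ∃ᶠ X in atTop, HasSolutions n (fun i => ζ ^ ((i : ℕ) + 1)) η X 1) :
    ENNReal.ofReal ((η - (k - 1)) / k) ≤ lambdaPow (k * n) 1 ζ := by
  refine le_of_forall_lt_imp_le_of_dense fun e he => ?_
  rw [← ENNReal.ofReal_toReal he.ne_top]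
  refine ofReal_le_lambdaVec (frequently_hasSolutions_mul hk ENNReal.toReal_nonneg ?_ h)
  have he' := ENNReal.toReal_lt_of_lt_ofReal he
  rw [lt_div_iff₀ (by exact_mod_cast hk)] at he'
  linarith

theorem stmt9_general (k n : ℕ) (hk : 0 < k) (ζ : ℝ) :
    (lambdaPow n 1 ζ - ((k - 1 : ℕ) : ℝ≥0∞)) / (k : ℝ≥0∞) ≤ lambdaPow (k * n) 1 ζ := by
  rw [ENNReal.div_le_iff_le_mul (Or.inl (by exact_mod_cast hk.ne'))
    (Or.inl (ENNReal.natCast_ne_top k)), tsub_le_iff_right]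
  refine sSup_le ?_
  rintro _ ⟨η, rfl, hP⟩
  have hk' : (0 : ℝ) < k := by exact_mod_cast hk
  calc ENNReal.ofReal η = ENNReal.ofReal ((η - (k - 1)) / k * k + (k - 1)) := by
        rw [div_mul_cancel₀ _ hk'.ne', sub_add_cancel]
    _ ≤ ENNReal.ofReal ((η - (k - 1)) / k) * k + ((k - 1 : ℕ) : ℝ≥0∞) := by
        grw [ENNReal.ofReal_add_le, ENNReal.ofReal_mul' hk'.le, ENNReal.ofReal_natCast,
          ← Nat.cast_pred hk, ENNReal.ofReal_natCast]
    _ ≤ lambdaPow (k * n) 1 ζ * k + ((k - 1 : ℕ) : ℝ≥0∞) := by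
        grw [ofReal_le_lambdaPow_mul hk (frequently_atTop.2 hP)]

/-- Theorem (Bugeaud): `λ_{kn,1}(ζ) ≥ (λ_{n,1}(ζ) − k + 1)/k` for transcendental `ζ`
(truncated subtraction in `ℝ≥0∞`; in particular the right side is `∞` when
`λ_{n,1}(ζ) = ∞`). -/
theorem stmt9 (k n : ℕ) (hk : 0 < k) (hn : 0 < n) (ζ : ℝ)
    (hζ : Transcendental ℚ ζ) :
    (lambdaPow n 1 ζ - ((k - 1 : ℕ) : ℝ≥0∞)) / (k : ℝ≥0∞) ≤ lambdaPow (k * n) 1 ζ :=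
  stmt9_general k n hk ζ
end

section
/- Let ζ be an irrational real number and k a positive integer. Then λ̂_{k,1}(ζ) ≤ max{1/λ_{1,1}(ζ), 1/k}, with the convention 1/∞ = 0. -/
/-!
Suppose `η > 1/k` is a uniform exponent and `λη > 1` for some `λ < λ_{1,1}(ζ)`, so that
`|Qζ - P| ≤ Q^(-λ)` for coprime `P, Q` with `Q` arbitrarily large (irrationality of `ζ` is what
makes the denominators unbounded). Choose `1/η < s < min(λ, k)` and a solution
`(x, y_1, …, y_k)` of the system at `X = Q^s`; put `y_0 = x`. The integer
`y_i P - y_{i+1} Q = -y_i (ζQ - P) + Q (ζ y_i - y_{i+1})` is `≪ Q^(s-λ) + Q^(1-sη) < 1` in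
absolute value, hence zero, so `x P^k = y_k Q^k`. Then `Q^k ∣ x`, and `Q^k ≤ |x| ≤ Q^s < Q^k`.
-/

open scoped ENNReal

open Filter

theorem Irrational.exists_pos_le_abs_mul_sub {ζ : ℝ} (hζ : Irrational ζ) (N : ℕ) :
    ∃ ε > 0, ∀ q : ℕ, 0 < q → q ≤ N → ∀ p : ℤ, ε ≤ |ζ * q - p| := by
  obtain ⟨q₀, hq₀, hmin⟩ := (Finset.Icc 1 (N + 1)).exists_min_image
    (fun q : ℕ => |ζ * q - round (ζ * q)|) ⟨1, by simp⟩
  refine ⟨|ζ * q₀ - round (ζ * q₀)|, ?_, fun q hq hqN p => ?_⟩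
  · have hq₀ : (q₀ : ℤ) ≠ 0 := by rw [Finset.mem_Icc] at hq₀; omega
    exact abs_pos.2 (sub_ne_zero.2 ((hζ.mul_intCast hq₀).ne_int _))
  · exact (hmin q (Finset.mem_Icc.2 ⟨hq, by omega⟩)).trans (round_le _ p)

theorem Rat.den_intCast_div_le_abs {x : ℤ} (hx : x ≠ 0) (y : ℤ) :
    ((y / x : ℚ).den : ℤ) ≤ |x| := by
  rw [Rat.intCast_div_eq_divInt]
  exact Int.le_of_dvd (abs_pos.2 hx) ((Rat.den_dvd y x).trans (self_dvd_abs x))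

theorem abs_mul_den_sub_num_le (ζ : ℝ) {x : ℤ} (hx : x ≠ 0) (y : ℤ) :
    |ζ * (y / x : ℚ).den - (y / x : ℚ).num| ≤ |ζ * x - y| := by
  have hden : ((y / x : ℚ).den : ℝ) ≤ |(x : ℝ)| := by
    exact_mod_cast Rat.den_intCast_div_le_abs hx y
  set q : ℚ := y / x with hq
  have h₁ : ζ * q.den - q.num = q.den * (ζ - q) := by
    rw [Rat.cast_def q]; field_simp
  have h₂ : ζ * x - y = x * (ζ - q) := by
    rw [hq]; push_cast; field_simp
  rw [h₁, h₂, abs_mul, abs_mul, Nat.abs_cast]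
  exact mul_le_mul_of_nonneg_right hden (abs_nonneg _)

theorem HasSolutions.exists_pow_approx {k : ℕ} {ζ η X : ℝ}
    (h : HasSolutions k (fun i => ζ ^ ((i : ℕ) + 1)) η X 1) (hX : X ^ (-η) < 1) :
    ∃ u : ℕ → ℤ, u 0 ≠ 0 ∧ |(u 0 : ℝ)| ≤ X ∧ ∀ i ≤ k, |ζ ^ i * u 0 - u i| ≤ X ^ (-η) := by
  obtain ⟨v, hli, hv⟩ := h
  obtain ⟨hX0, happrox⟩ := hv 0
  set w := v 0
  have hw0 : w 0 ≠ 0 := by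
    intro hw0
    apply hli.ne_zero 0
    funext j
    refine Fin.cases hw0 (fun m => ?_) j
    have hm := happrox m
    rw [hw0, Int.cast_zero, mul_zero, zero_sub, abs_neg] at hm
    exact_mod_cast Int.abs_lt_one_iff.1 (by exact_mod_cast hm.trans_lt hX)
  refine ⟨fun n => if h : n < k + 1 then w ⟨n, h⟩ else 0, by simpa using hw0,
    by simpa using hX0, ?_⟩
  rintro (_ | m) hm
  · simpa using Real.rpow_nonneg ((abs_nonneg _).trans hX0) _
  · simpa [Nat.lt_succ_iff.2 hm] using happrox ⟨m, hm⟩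

theorem Irrational.frequently_coprime_approx {ζ lam : ℝ} (hζ : Irrational ζ) (hlam : 0 < lam)
    (h : ∃ᶠ X in atTop, HasSolutions 1 (fun i => ζ ^ ((i : ℕ) + 1)) lam X 1) :
    ∃ᶠ Q : ℕ in atTop, ∃ P : ℤ, IsCoprime P Q ∧ |ζ * Q - P| ≤ (Q : ℝ) ^ (-lam) := by
  rw [frequently_atTop]
  intro N
  obtain ⟨ε, hε, hεN⟩ := hζ.exists_pos_le_abs_mul_sub N
  have hsmall : ∀ᶠ X : ℝ in atTop, X ^ (-lam) < min ε 1 :=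
    (tendsto_rpow_neg_atTop hlam).eventually (gt_mem_nhds (lt_min hε one_pos))
  obtain ⟨X, hsol, hX⟩ := (h.and_eventually hsmall).exists
  obtain ⟨u, hu0, hu0X, hu⟩ := hsol.exists_pow_approx (hX.trans_le (min_le_right _ _))
  have hden : ((u 1 / u 0 : ℚ).den : ℝ) ≤ X := by
    refine le_trans ?_ hu0X
    exact_mod_cast Rat.den_intCast_div_le_abs hu0 (u 1)
  set q : ℚ := u 1 / u 0
  have happ : |ζ * q.den - q.num| ≤ X ^ (-lam) :=
    (abs_mul_den_sub_num_le ζ hu0 (u 1)).trans (by simpa using hu 1 le_rfl)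
  have hN : N ≤ q.den := by
    by_contra! hN
    exact (hεN q.den q.pos hN.le q.num).not_gt (happ.trans_lt (hX.trans_le (min_le_left _ _)))
  refine ⟨q.den, hN, q.num, Int.isCoprime_iff_nat_coprime.2 (by simpa using q.reduced), ?_⟩
  exact happ.trans (Real.rpow_le_rpow_of_nonpos (by simpa using q.pos) hden (by linarith))

theorem IsCoprime.pow_dvd_of_forall_mul_eq_mul {R : Type*} [CommSemiring R] {P Q : R}
    (hPQ : IsCoprime P Q) {u : ℕ → R} {k : ℕ} (h : ∀ i < k, u i * P = u (i + 1) * Q) :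
    Q ^ k ∣ u 0 := by
  have htel : ∀ i ≤ k, u 0 * P ^ i = u i * Q ^ i := by
    intro i hi
    induction i with
    | zero => simp
    | succ i ih =>
      calc u 0 * P ^ (i + 1) = u 0 * P ^ i * P := by ring
        _ = u i * P * Q ^ i := by rw [ih (by omega)]; ring
        _ = u (i + 1) * Q ^ (i + 1) := by rw [h i (by omega)]; ring
  exact hPQ.symm.pow.dvd_of_dvd_mul_right ⟨u k, by rw [htel k le_rfl, mul_comm]⟩

theorem Int.mul_eq_mul_of_abs_lt (ζ : ℝ) {a b P Q : ℤ}
    (h : |(a : ℝ)| * |ζ * Q - P| + |(Q : ℝ)| * |ζ * a - b| < 1) : a * P = b * Q := by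
  have hlt : |((a * P - b * Q : ℤ) : ℝ)| < 1 := calc
    |((a * P - b * Q : ℤ) : ℝ)| = |-(a * (ζ * Q - P)) + Q * (ζ * a - b)| := by push_cast; ring_nf
    _ ≤ |(a : ℝ)| * |ζ * Q - P| + |(Q : ℝ)| * |ζ * a - b| := by
      grw [abs_add_le, abs_neg, abs_mul, abs_mul]
    _ < 1 := h
  rw [← Int.cast_abs, ← Int.cast_one, Int.cast_lt, Int.abs_lt_one_iff] at hlt
  exact sub_eq_zero.1 hlt

theorem mul_eq_mul_of_pow_approx {ζ δ ε : ℝ} {x y z P Q : ℤ} (i : ℕ)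
    (hy : |ζ ^ i * x - y| ≤ δ) (hz : |ζ ^ (i + 1) * x - z| ≤ δ) (hPQ : |ζ * Q - P| ≤ ε)
    (hsmall : (|ζ| ^ i * |(x : ℝ)| + δ) * ε + |(Q : ℝ)| * ((|ζ| + 1) * δ) < 1) :
    y * P = z * Q := by
  refine Int.mul_eq_mul_of_abs_lt ζ (lt_of_le_of_lt ?_ hsmall)
  have hy' : |(y : ℝ)| ≤ |ζ| ^ i * |(x : ℝ)| + δ := calc
    |(y : ℝ)| = |ζ ^ i * x - (ζ ^ i * x - y)| := by ring_nf
    _ ≤ |ζ| ^ i * |(x : ℝ)| + δ := by grw [abs_sub, abs_mul, abs_pow, hy]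
  have hz' : |ζ * y - z| ≤ (|ζ| + 1) * δ := calc
    |ζ * y - z| = |-(ζ * (ζ ^ i * x - y)) + (ζ ^ (i + 1) * x - z)| := by ring_nf
    _ ≤ |ζ| * δ + δ := by grw [abs_add_le, abs_neg, abs_mul, hy, hz]
    _ = (|ζ| + 1) * δ := by ring
  have hδ : 0 ≤ δ := (abs_nonneg _).trans hy
  gcongr

theorem pow_le_abs_of_pow_approx {k : ℕ} {ζ δ ε : ℝ} {u : ℕ → ℤ} {P Q : ℤ}
    (hPQ : IsCoprime P Q) (hu0 : u 0 ≠ 0) (hu : ∀ i ≤ k, |ζ ^ i * u 0 - u i| ≤ δ)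
    (happ : |ζ * Q - P| ≤ ε)
    (hsmall : (max 1 |ζ| ^ k * |(u 0 : ℝ)| + δ) * ε + |(Q : ℝ)| * ((|ζ| + 1) * δ) < 1) :
    |Q| ^ k ≤ |u 0| := by
  have hε : 0 ≤ ε := (abs_nonneg _).trans happ
  have hrel : ∀ i < k, u i * P = u (i + 1) * Q := by
    intro i hi
    have hpow : |ζ| ^ i ≤ max 1 |ζ| ^ k :=
      (pow_le_pow_left₀ (abs_nonneg ζ) (le_max_right 1 |ζ|) i).trans
        (pow_le_pow_right₀ (le_max_left 1 |ζ|) hi.le)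
    refine mul_eq_mul_of_pow_approx i (hu i hi.le) (hu (i + 1) hi) happ (lt_of_le_of_lt ?_ hsmall)
    gcongr
  rw [← abs_pow]
  exact Int.le_of_dvd (abs_pos.2 hu0) ((abs_dvd_abs _ _).2 (hPQ.pow_dvd_of_forall_mul_eq_mul hrel))
theorem approx_error_le_rpow {B c a Q s lam η : ℝ} (hQ : 0 < Q) (hB : 0 ≤ B) (ha : a ≤ Q ^ s)
    (hη : (Q ^ s) ^ (-η) ≤ Q ^ s) :
    (B * a + (Q ^ s) ^ (-η)) * Q ^ (-lam) + Q * (c * (Q ^ s) ^ (-η)) ≤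
      (B + 1) * Q ^ (-(lam - s)) + c * Q ^ (-(s * η - 1)) := by
  have e₁ : Q ^ s * Q ^ (-lam) = Q ^ (-(lam - s)) := by
    rw [← Real.rpow_add hQ]; ring_nf
  have e₂ : Q * (Q ^ s) ^ (-η) = Q ^ (-(s * η - 1)) := by
    rw [← Real.rpow_mul hQ.le, show -(s * η - 1) = 1 + s * -η by ring, Real.rpow_add hQ,
      Real.rpow_one]
  have h₁ : (B * a + (Q ^ s) ^ (-η)) * Q ^ (-lam) ≤ (B + 1) * Q ^ s * Q ^ (-lam) := by
    have := mul_le_mul_of_nonneg_left ha hB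
    exact mul_le_mul_of_nonneg_right (by linarith) (by positivity)
  calc (B * a + (Q ^ s) ^ (-η)) * Q ^ (-lam) + Q * (c * (Q ^ s) ^ (-η))
      ≤ (B + 1) * Q ^ s * Q ^ (-lam) + c * (Q * (Q ^ s) ^ (-η)) := by linarith
    _ = (B + 1) * Q ^ (-(lam - s)) + c * Q ^ (-(s * η - 1)) := by
        rw [mul_assoc, e₁, e₂]

theorem Irrational.not_eventually_hasSolutions_pow {k : ℕ} {ζ lam η : ℝ} (hζ : Irrational ζ)
    (hlam : ∃ᶠ X in atTop, HasSolutions 1 (fun i => ζ ^ ((i : ℕ) + 1)) lam X 1)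
    (hη : 0 < η) (hlamη : η⁻¹ < lam) (hkη : η⁻¹ < k) :
    ¬ ∀ᶠ X in atTop, HasSolutions k (fun i => ζ ^ ((i : ℕ) + 1)) η X 1 := by
  intro hsol
  obtain ⟨s, hηs, hs⟩ := exists_between (lt_min hlamη hkη)
  obtain ⟨hslam, hsk⟩ := lt_min_iff.1 hs
  have hs0 : 0 < s := (inv_pos.2 hη).trans hηs
  have hsη : 1 < s * η := (inv_lt_iff_one_lt_mul₀ hη).1 hηs
  set C := max 1 |ζ| ^ k + 1
  have hsmall : Tendsto (fun t : ℝ => C * t ^ (-(lam - s)) + (|ζ| + 1) * t ^ (-(s * η - 1)))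
      atTop (nhds 0) := by
    simpa using ((tendsto_rpow_neg_atTop (sub_pos.2 hslam)).const_mul C).add
      ((tendsto_rpow_neg_atTop (sub_pos.2 hsη)).const_mul (|ζ| + 1))
  have hev : ∀ᶠ Q : ℕ in atTop, HasSolutions k (fun i => ζ ^ ((i : ℕ) + 1)) η ((Q : ℝ) ^ s) 1 ∧
      1 < (Q : ℝ) ∧ C * (Q : ℝ) ^ (-(lam - s)) + (|ζ| + 1) * (Q : ℝ) ^ (-(s * η - 1)) < 1 :=
    tendsto_natCast_atTop_atTop.eventually <|
      ((tendsto_rpow_atTop hs0).eventually hsol).and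
        ((eventually_gt_atTop 1).and (hsmall.eventually (gt_mem_nhds one_pos)))
  obtain ⟨Q, ⟨P, hPQ, happ⟩, hsolQ, hQ1, hQsmall⟩ :=
    ((hζ.frequently_coprime_approx (hs0.trans hslam) hlam).and_eventually hev).exists
  set X := (Q : ℝ) ^ s
  have hX1 : 1 < X := Real.one_lt_rpow hQ1 hs0
  have hXη : X ^ (-η) < 1 := Real.rpow_lt_one_of_one_lt_of_neg hX1 (neg_neg_of_pos hη)
  obtain ⟨u, hu0, hu0X, hu⟩ := hsolQ.exists_pow_approx hXη
  have hQu : |(Q : ℤ)| ^ k ≤ |u 0| := by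
    refine pow_le_abs_of_pow_approx hPQ hu0 hu happ (lt_of_le_of_lt ?_ hQsmall)
    rw [Int.cast_natCast, Nat.abs_cast]
    exact approx_error_le_rpow (one_pos.trans hQ1) (by positivity) hu0X (hXη.le.trans hX1.le)
  have hQu' : (Q : ℝ) ^ k ≤ |(u 0 : ℝ)| := by
    rw [← Int.cast_abs]; exact_mod_cast hQu
  have hXQ : X < (Q : ℝ) ^ k := by
    simpa using Real.rpow_lt_rpow_of_exponent_lt hQ1 hsk
  linarith

theorem stmt11_general (k : ℕ) (ζ : ℝ) (hζ : Irrational ζ) :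
    lambdaHatPow k 1 ζ ≤ max (1 / lambdaPow 1 1 ζ) (1 / (k : ℝ≥0∞)) := by
  refine sSup_le ?_
  rintro _ ⟨η, rfl, X₀, hsol⟩
  by_contra! hlt
  obtain ⟨hlam, hk⟩ := max_lt_iff.1 hlt
  have hη : 0 < η := ENNReal.ofReal_pos.1 (pos_of_gt hk)
  rw [one_div, ENNReal.inv_lt_iff_inv_lt, ← ENNReal.ofReal_inv_of_pos hη] at hlam hk
  rw [← ENNReal.ofReal_natCast, ENNReal.ofReal_lt_ofReal_iff'] at hk
  obtain ⟨_, ⟨lam, rfl, hlamsol⟩, hlamη⟩ := lt_sSup_iff.1 hlam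
  exact hζ.not_eventually_hasSolutions_pow (frequently_atTop.2 hlamsol) hη
    (ENNReal.ofReal_lt_ofReal_iff'.1 hlamη).1 hk.1 (eventually_atTop.2 ⟨X₀, hsol⟩)

/-- Theorem (Schleischitz): `λ̂_{k,1}(ζ) ≤ max{1/λ_{1,1}(ζ), 1/k}` (with `1/∞ = 0`). -/
theorem stmt11 (k : ℕ) (hk : 0 < k) (ζ : ℝ) (hζ : Irrational ζ) :
    lambdaHatPow k 1 ζ ≤ max (1 / lambdaPow 1 1 ζ) (1 / (k : ℝ≥0∞)) :=
  stmt11_general k ζ hζ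
end
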